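/- Let A, B, Y ∈ ℚ[x,x⁻¹][[t]] with ord_t B > 0 and ord_t Y > 0. Then there exists at most one formal power series U ∈ ℚ[[x,t]] satisfying U(t,x) = A(t,x) + B(t,x)·U(t, Y(t,x)). -/

import Mathlib

noncomputable section

/-- The composition `U(t, Y(t,x))`, obtained by substituting the series
`Y ∈ ℚ[x,x⁻¹][[t]]` for the variable `x` in the formal power series
`U ∈ ℚ[[x,t]]`.  Here variable `0` of `U` is `x` and variable `1` is `t`, and
`ℚ[x,x⁻¹][[t]]` is modelled as `PowerSeries (LaurentPolynomial ℚ)`.  Whenever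
`Y` has positive `t`-adic valuation, only finitely many terms of `U` contribute
to each power of `t`, and the formula below (in which the inner sums are then
actually finite sums over all relevant indices) computes the genuine
composition `∑_{i,n} (coeff of x^i t^n in U) · Y(t,x)^i · t^n`. -/
def substX (U : MvPowerSeries (Fin 2) ℚ) (Y : PowerSeries (LaurentPolynomial ℚ)) :
    PowerSeries (LaurentPolynomial ℚ) :=
  PowerSeries.mk fun m =>
    ∑ n ∈ Finset.range (m + 1), ∑ i ∈ Finset.range (m + 1),
      MvPowerSeries.coeff (Finsupp.single 0 i + Finsupp.single 1 n) U •
        PowerSeries.coeff (m - n) (Y ^ i)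

/-- The statement that `U ∈ ℚ[[x,t]]` satisfies the functional equation
`U(t,x) = A(t,x) + B(t,x) · U(t, Y(t,x))`, expressed by comparing, for every
`m ∈ ℕ` and `k ∈ ℤ`, the coefficients of `x^k t^m` of the two sides (the
coefficient of `x^k t^m` of `U` being `0` for `k < 0`). -/
def IsCompSolution (A B Y : PowerSeries (LaurentPolynomial ℚ))
    (U : MvPowerSeries (Fin 2) ℚ) : Prop :=
  ∀ (m : ℕ) (k : ℤ),
    (if 0 ≤ k then
        MvPowerSeries.coeff (Finsupp.single 0 k.toNat + Finsupp.single 1 m) U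
      else 0)
      = (AddMonoidAlgebra.coeff (PowerSeries.coeff m (A + B * substX U Y))) k

/-!
The coefficient of `t^m` in `U(t, Y(t,x))` only involves coefficients `x^i t^n` of `U` with
`n ≤ m`, and multiplying by `B`, which has no constant term, pushes this up by one: the
coefficient of `t^m` of `A + B · U(t, Y(t,x))` only involves the coefficients of `U` with
`t`-degree `< m`. So the functional equation determines the `t^m`-part of `U` from its lower
parts, and two solutions agree by strong induction on `m`.
-/

theorem PowerSeries.coeff_mul_congr_of_constantCoeff_eq_zero {R : Type*} [Semiring R]
    {B F G : PowerSeries R} (hB : PowerSeries.constantCoeff B = 0) {m : ℕ}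
    (hFG : ∀ k < m, PowerSeries.coeff k F = PowerSeries.coeff k G) :
    PowerSeries.coeff m (B * F) = PowerSeries.coeff m (B * G) := by
  rw [PowerSeries.coeff_mul, PowerSeries.coeff_mul]
  refine Finset.sum_congr rfl fun p hp => ?_
  rw [Finset.HasAntidiagonal.mem_antidiagonal] at hp
  rcases Nat.eq_zero_or_pos p.1 with h0 | hpos
  · rw [h0, PowerSeries.coeff_zero_eq_constantCoeff_apply, hB, zero_mul, zero_mul]
  · rw [hFG p.2 (by omega)]

theorem MvPowerSeries.ext_fin_two {R : Type*} [Semiring R] {U V : MvPowerSeries (Fin 2) R}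
    (h : ∀ i n, MvPowerSeries.coeff (Finsupp.single 0 i + Finsupp.single 1 n) U =
      MvPowerSeries.coeff (Finsupp.single 0 i + Finsupp.single 1 n) V) :
    U = V := by
  ext d
  have hd : d = Finsupp.single 0 (d 0) + Finsupp.single 1 (d 1) := by
    ext j
    fin_cases j <;> simp
  rw [hd]
  exact h (d 0) (d 1)

theorem coeff_substX_congr {U V : MvPowerSeries (Fin 2) ℚ}
    (Y : PowerSeries (LaurentPolynomial ℚ)) {m : ℕ}
    (hUV : ∀ n ≤ m, ∀ i, MvPowerSeries.coeff (Finsupp.single 0 i + Finsupp.single 1 n) U =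
      MvPowerSeries.coeff (Finsupp.single 0 i + Finsupp.single 1 n) V) :
    PowerSeries.coeff m (substX U Y) = PowerSeries.coeff m (substX V Y) := by
  simp only [substX, PowerSeries.coeff_mk]
  refine Finset.sum_congr rfl fun n hn => Finset.sum_congr rfl fun i _ => ?_
  rw [hUV n (Nat.lt_succ_iff.mp (Finset.mem_range.mp hn)) i]

theorem IsCompSolution.coeff_eq {A B Y : PowerSeries (LaurentPolynomial ℚ)}
    {U : MvPowerSeries (Fin 2) ℚ} (hU : IsCompSolution A B Y U) (m i : ℕ) :
    MvPowerSeries.coeff (Finsupp.single 0 i + Finsupp.single 1 m) U =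
      (PowerSeries.coeff m (A + B * substX U Y)).coeff (i : ℤ) := by
  simpa using hU m i

theorem at_most_one_solution_general (A B Y : PowerSeries (LaurentPolynomial ℚ))
    (hB : PowerSeries.constantCoeff B = 0)
    (U₁ U₂ : MvPowerSeries (Fin 2) ℚ)
    (h₁ : IsCompSolution A B Y U₁) (h₂ : IsCompSolution A B Y U₂) :
    U₁ = U₂ := by
  suffices key : ∀ m i, MvPowerSeries.coeff (Finsupp.single 0 i + Finsupp.single 1 m) U₁ =
      MvPowerSeries.coeff (Finsupp.single 0 i + Finsupp.single 1 m) U₂ from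
    MvPowerSeries.ext_fin_two fun i n => key n i
  intro m
  induction m using Nat.strong_induction_on with
  | _ m ih =>
    have hsubst : ∀ k < m, PowerSeries.coeff k (substX U₁ Y) =
        PowerSeries.coeff k (substX U₂ Y) := fun k hk =>
      coeff_substX_congr Y fun n hn => ih n (by omega)
    intro i
    rw [h₁.coeff_eq, h₂.coeff_eq, map_add, map_add,
      PowerSeries.coeff_mul_congr_of_constantCoeff_eq_zero hB hsubst]

/-- Lemma 1: if `A, B, Y ∈ ℚ[x,x⁻¹][[t]]` with `ord_t B > 0` and `ord_t Y > 0`,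
then there is at most one power series `U ∈ ℚ[[x,t]]` with
`U(t,x) = A(t,x) + B(t,x)·U(t,Y(t,x))`. -/
theorem at_most_one_solution (A B Y : PowerSeries (LaurentPolynomial ℚ))
    (hB : PowerSeries.constantCoeff B = 0)
    (hY : PowerSeries.constantCoeff Y = 0)
    (U₁ U₂ : MvPowerSeries (Fin 2) ℚ)
    (h₁ : IsCompSolution A B Y U₁) (h₂ : IsCompSolution A B Y U₂) :
    U₁ = U₂ :=
  at_most_one_solution_general A B Y hB U₁ U₂ h₁ h₂
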